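/- arXiv:1912.10548 — 2 statements merged into one kernel-verified Lean document; each statement's English description precedes it below -/
import Mathlib

section
/- Let q(x) = C·exp(−ψ(|x|)) on ℝ^d with ψ of von Mises type (ψ' > 0 eventually, ψ → ∞, a' → 0 where a = 1/ψ'), and a regularly varying. If R = R_n is chosen so that n·a(R)·R^{d−1}·e^{−ψ(R)} ~ (log n)^{−1}, then n·∫_{|x|≥R_n} q(x) dx → 0 as n → ∞, and hence the probability that a Poisson process 𝒫_n with intensity n·q contains no point outside B(0,R_n) tends to 1. -/
/-!
Since `a = o(z)`, `z ψ'(z) → ∞`, so `ψ(r) - s log r` is eventually increasing for every `s`;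
comparing `e^{-ψ(|x|)}` with `|x|^{-s}` in polar coordinates bounds `∫_{|x| ≥ R} e^{-ψ(|x|)}` by
`c_d R^d e^{-ψ(R)} / (s - d)`. Regular variation of `a` keeps `ψ'` on `[z/2, z]` comparable to
`ψ'(z)` on average (Fatou's lemma), so `ψ(z) ≥ ψ(z) - ψ(z/2) ≳ z ψ'(z)`, i.e. `R ≲ a(R) ψ(R)`.
The choice of `R_n` forces `ψ(R_n) = O(log n)`, hence `n R_n^d e^{-ψ(R_n)} = O(1)`, and letting
`s → ∞` gives `n ∫_{|x| ≥ R_n} q → 0`. A Poisson count is `0` with probability `exp(-mean)`.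
-/

open Filter Topology MeasureTheory ProbabilityTheory
open Set Real Module Metric
open scoped NNReal ENNReal

theorem measure_setOf_eq_zero_of_map_eq_poissonMeasure {Ω : Type*} [MeasurableSpace Ω]
    {P : Measure Ω} {N : Ω → ℕ} {r : ℝ≥0} (h : P.map N = poissonMeasure r) :
    P {ω | N ω = 0} = ENNReal.ofReal (exp (-r)) := by
  have hN : AEMeasurable N P := by
    by_contra hN
    rw [Measure.map_of_not_aemeasurable hN] at h
    simpa using congrArg (· univ) h
  rw [show {ω | N ω = 0} = N ⁻¹' {0} from rfl,
    ← Measure.map_apply_of_aemeasurable hN (measurableSet_singleton 0), h,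
    poissonMeasure_singleton]
  simp

theorem tendsto_measure_setOf_eq_zero_of_poisson {ι Ω : Type*} [MeasurableSpace Ω]
    {P : Measure Ω} {l : Filter ι} {N : ι → Ω → ℕ} {r : ι → ℝ}
    (h : ∀ i, P.map (N i) = poissonMeasure (r i).toNNReal) (hr : Tendsto r l (𝓝 0)) :
    Tendsto (fun i => P {ω | N i ω = 0}) l (𝓝 1) := by
  simp only [fun i => measure_setOf_eq_zero_of_map_eq_poissonMeasure (h i), Real.coe_toNNReal']
  have hmax : Tendsto (fun i => max (r i) 0) l (𝓝 0) := by
    simpa using hr.max (tendsto_const_nhds (x := (0 : ℝ)))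
  have hcont : Continuous fun x : ℝ => ENNReal.ofReal (exp (-x)) :=
    ENNReal.continuous_ofReal.comp (continuous_exp.comp continuous_neg)
  simpa [Function.comp_def] using (hcont.tendsto 0).comp hmax

theorem tendsto_div_atTop_of_isLittleO {a : ℝ → ℝ} (h : a =o[atTop] id)
    (ha : ∀ᶠ z in atTop, 0 < a z) : Tendsto (fun z => z / a z) atTop atTop := by
  have h0 : Tendsto (fun z => a z / z) atTop (𝓝[>] 0) :=
    tendsto_nhdsWithin_iff.2 ⟨h.tendsto_div_nhds_zero,
      (ha.and (eventually_gt_atTop 0)).mono fun z hz => div_pos hz.1 hz.2⟩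
  simpa [Function.comp_def] using tendsto_inv_nhdsGT_zero.comp h0

theorem monotoneOn_sub_mul_log {ψ ψ' : ℝ → ℝ} {s z₁ : ℝ} (hz₁ : 0 < z₁)
    (hψ : ∀ z ∈ Ici z₁, HasDerivAt ψ (ψ' z) z) (hs : ∀ z ∈ Ici z₁, s ≤ z * ψ' z) :
    MonotoneOn (fun r => ψ r - s * log r) (Ici z₁) := by
  have hderiv : ∀ z ∈ Ici z₁, HasDerivAt (fun r => ψ r - s * log r) (ψ' z - s * z⁻¹) z :=
    fun z hz => (hψ z hz).sub ((hasDerivAt_log (hz₁.trans_le hz).ne').const_mul s)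
  refine monotoneOn_of_hasDerivWithinAt_nonneg (convex_Ici z₁)
    (fun z hz => (hderiv z hz).continuousAt.continuousWithinAt)
    (fun z hz => (hderiv z (interior_subset hz)).hasDerivWithinAt) fun z hz => ?_
  have hz : z₁ ≤ z := interior_subset hz
  have hz0 : 0 < z := hz₁.trans_le hz
  rw [sub_nonneg, ← div_eq_mul_inv, div_le_iff₀ hz0, mul_comm]
  exact hs z hz

theorem exists_monotoneOn_sub_mul_log {ψ ψ' : ℝ → ℝ} {z₀ : ℝ}
    (hψ : ∀ z ∈ Ici z₀, HasDerivAt ψ (ψ' z) z) (hψ' : Tendsto (fun z => z * ψ' z) atTop atTop)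
    (s : ℝ) : ∃ z₁ > 0, MonotoneOn (fun r => ψ r - s * log r) (Ici z₁) := by
  obtain ⟨z₂, hz₂⟩ := eventually_atTop.1 (hψ'.eventually_ge_atTop s)
  refine ⟨max (max z₀ z₂) 1, by positivity, monotoneOn_sub_mul_log (by positivity)
    (fun z hz => hψ z ?_) fun z hz => hz₂ z ?_⟩ <;>
  · simp only [mem_Ici, max_le_iff] at hz ⊢
    linarith [hz.1.1, hz.1.2]

theorem tendsto_sub_mul_log_atTop {ψ ψ' : ℝ → ℝ} {z₀ : ℝ}
    (hψ : ∀ z ∈ Ici z₀, HasDerivAt ψ (ψ' z) z) (hψ' : Tendsto (fun z => z * ψ' z) atTop atTop)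
    (s : ℝ) : Tendsto (fun z => ψ z - s * log z) atTop atTop := by
  obtain ⟨z₁, hz₁, hmono⟩ := exists_monotoneOn_sub_mul_log hψ hψ' (s + 1)
  refine tendsto_atTop_mono' _ ?_
    (tendsto_atTop_add_const_left _ (ψ z₁ - (s + 1) * log z₁) tendsto_log_atTop)
  filter_upwards [eventually_ge_atTop z₁] with z hz
  have := hmono self_mem_Ici hz hz
  simp only at this
  linarith

theorem exp_neg_le_of_monotoneOn_sub_mul_log {ψ : ℝ → ℝ} {s z r : ℝ} (hz : 0 < z)
    (hψ : MonotoneOn (fun r => ψ r - s * log r) (Ici z)) (hr : z ≤ r) :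
    exp (-ψ r) ≤ exp (-ψ z) * z ^ s * r ^ (-s) := by
  have hr0 : 0 < r := hz.trans_le hr
  have := hψ self_mem_Ici hr hr
  rw [rpow_def_of_pos hz, rpow_def_of_pos hr0, ← exp_add, ← exp_add, exp_le_exp]
  simp only at this
  linarith

theorem measurableSet_setOf_le_norm {E : Type*} [NormedAddCommGroup E] [MeasurableSpace E]
    [OpensMeasurableSpace E] (z : ℝ) : MeasurableSet {x : E | z ≤ ‖x‖} :=
  measurableSet_le measurable_const measurable_norm

theorem pow_mul_indicator_rpow_neg_eqOn {s z : ℝ} {d : ℕ} (hd : 1 ≤ d) :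
    EqOn (fun y : ℝ => y ^ (d - 1) • (Ici z).indicator (fun y => y ^ (-s)) y)
      ((Ici z).indicator fun y => y ^ ((d : ℝ) - 1 - s)) (Ioi 0) := by
  intro y (hy : 0 < y)
  by_cases hzy : z ≤ y
  · simp [hzy, indicator_of_mem, ← rpow_natCast, Nat.cast_sub hd, ← rpow_add hy, sub_eq_add_neg]
  · simp [hzy]

section Radial

variable {E : Type*} [NormedAddCommGroup E] [NormedSpace ℝ E] [FiniteDimensional ℝ E]
  [MeasurableSpace E] [BorelSpace E] [Nontrivial E] (μ : Measure E) [μ.IsAddHaarMeasure]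
  {s z : ℝ}

theorem integrableOn_norm_rpow_neg (hz : 0 < z) (hs : finrank ℝ E < s) :
    IntegrableOn (fun x : E => ‖x‖ ^ (-s)) {x | z ≤ ‖x‖} μ := by
  rw [← integrable_indicator_iff (measurableSet_setOf_le_norm z),
    show {x : E | z ≤ ‖x‖}.indicator (‖·‖ ^ (-s)) = fun x => (Ici z).indicator (· ^ (-s)) ‖x‖
      from rfl,
    integrable_fun_norm_addHaar, integrableOn_congr_fun
      (pow_mul_indicator_rpow_neg_eqOn finrank_pos) measurableSet_Ioi]
  exact (((integrableOn_Ici_iff_integrableOn_Ioi).2 (integrableOn_Ioi_rpow_of_lt (by linarith) hz)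
    ).integrable_indicator measurableSet_Ici).integrableOn

theorem integral_norm_rpow_neg (hz : 0 < z) (hs : finrank ℝ E < s) :
    ∫ x in {x | z ≤ ‖x‖}, ‖x‖ ^ (-s) ∂μ
      = finrank ℝ E * μ.real (ball 0 1) * z ^ ((finrank ℝ E : ℝ) - s) / (s - finrank ℝ E) := by
  rw [← integral_indicator (measurableSet_setOf_le_norm z),
    show {x : E | z ≤ ‖x‖}.indicator (‖·‖ ^ (-s)) = fun x => (Ici z).indicator (· ^ (-s)) ‖x‖
      from rfl,
    integral_fun_norm_addHaar, setIntegral_congr_fun measurableSet_Ioi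
      (pow_mul_indicator_rpow_neg_eqOn finrank_pos),
    integral_indicator measurableSet_Ici, Measure.restrict_restrict measurableSet_Ici,
    inter_eq_left.2 (Ici_subset_Ioi.2 hz), integral_Ici_eq_integral_Ioi,
    integral_Ioi_rpow_of_lt (by linarith) hz, nsmul_eq_mul, smul_eq_mul]
  rw [show (finrank ℝ E : ℝ) - 1 - s + 1 = finrank ℝ E - s by ring, neg_div, ← div_neg, neg_sub]
  ring

theorem integral_exp_neg_setOf_le_norm_le {ψ : ℝ → ℝ} (hz : 0 < z) (hs : finrank ℝ E < s)
    (hψ : MonotoneOn (fun r => ψ r - s * log r) (Ici z)) :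
    ∫ x in {x | z ≤ ‖x‖}, exp (-ψ ‖x‖) ∂μ
      ≤ finrank ℝ E * μ.real (ball 0 1) / (s - finrank ℝ E) * (z ^ finrank ℝ E * exp (-ψ z)) :=
  calc ∫ x in {x | z ≤ ‖x‖}, exp (-ψ ‖x‖) ∂μ
      ≤ ∫ x in {x | z ≤ ‖x‖}, exp (-ψ z) * z ^ s * ‖x‖ ^ (-s) ∂μ :=
        integral_mono_of_nonneg (.of_forall fun _ => (exp_pos _).le)
          ((integrableOn_norm_rpow_neg μ hz hs).const_mul _)
          (ae_restrict_of_forall_mem (measurableSet_setOf_le_norm z) fun _ hx =>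
            exp_neg_le_of_monotoneOn_sub_mul_log hz hψ hx)
    _ = finrank ℝ E * μ.real (ball 0 1) / (s - finrank ℝ E) * (z ^ finrank ℝ E * exp (-ψ z)) := by
        have hpow : z ^ s * z ^ ((finrank ℝ E : ℝ) - s) = z ^ finrank ℝ E := by
          rw [← rpow_add hz, add_sub_cancel, rpow_natCast]
        rw [integral_const_mul, integral_norm_rpow_neg μ hz hs, ← hpow]
        ring

theorem eventually_natCast_mul_integral_le {d : ℕ} (hE : finrank ℝ E = d) {ψ : ℝ → ℝ}
    {C s B : ℝ} (hC : 0 ≤ C) (hs : d < s) {R : ℕ → ℝ} (hR : Tendsto R atTop atTop)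
    (hψ : ∃ z₁ > 0, MonotoneOn (fun r => ψ r - s * log r) (Ici z₁))
    (hB : ∀ᶠ n : ℕ in atTop, n * R n ^ d * exp (-ψ (R n)) ≤ B) :
    ∀ᶠ n : ℕ in atTop, n * ∫ x in {x | R n ≤ ‖x‖}, C * exp (-ψ ‖x‖) ∂μ
      ≤ C * (d * μ.real (ball 0 1)) * B / (s - d) := by
  subst hE
  obtain ⟨z₁, hz₁, hmono⟩ := hψ
  filter_upwards [hR.eventually_ge_atTop z₁, hB] with n hn hBn
  have hK : 0 ≤ C * (finrank ℝ E * μ.real (ball 0 1) / (s - finrank ℝ E)) :=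
    mul_nonneg hC (div_nonneg (by positivity) (sub_pos.2 hs).le)
  calc (n : ℝ) * ∫ x in {x | R n ≤ ‖x‖}, C * exp (-ψ ‖x‖) ∂μ
      = C * (n * ∫ x in {x | R n ≤ ‖x‖}, exp (-ψ ‖x‖) ∂μ) := by rw [integral_const_mul]; ring
    _ ≤ C * (n * (finrank ℝ E * μ.real (ball 0 1) / (s - finrank ℝ E)
          * (R n ^ finrank ℝ E * exp (-ψ (R n))))) := by
        gcongr
        exact integral_exp_neg_setOf_le_norm_le μ (hz₁.trans_le hn) hs
          (hmono.mono (Ici_subset_Ici.2 hn))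
    _ = C * (finrank ℝ E * μ.real (ball 0 1) / (s - finrank ℝ E))
          * (n * R n ^ finrank ℝ E * exp (-ψ (R n))) := by ring
    _ ≤ C * (finrank ℝ E * μ.real (ball 0 1) / (s - finrank ℝ E)) * B :=
        mul_le_mul_of_nonneg_left hBn hK
    _ = _ := by ring

end Radial

theorem eventually_lt_lintegral_ofReal_ratio {φ : ℝ → ℝ} (hφ : Measurable φ) {σ : ℝ}
    (hRV : ∀ t > 0, Tendsto (fun z => φ (t * z) / φ z) atTop (𝓝 (t ^ σ)))
    {μ : Measure ℝ} (hμ : ∀ᵐ t ∂μ, 0 < t) {b : ℝ≥0∞}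
    (hb : b < ∫⁻ t, ENNReal.ofReal (t ^ σ) ∂μ) :
    ∀ᶠ z in atTop, b < ∫⁻ t, ENNReal.ofReal (φ (t * z) / φ z) ∂μ := by
  refine eventually_lt_of_lt_liminf (hb.trans_le ?_)
  calc ∫⁻ t, ENNReal.ofReal (t ^ σ) ∂μ
      = ∫⁻ t, liminf (fun z => ENNReal.ofReal (φ (t * z) / φ z)) atTop ∂μ :=
        lintegral_congr_ae <| hμ.mono fun t ht =>
          ((ENNReal.continuous_ofReal.tendsto _).comp (hRV t ht)).liminf_eq.symm
    _ ≤ liminf (fun z => ∫⁻ t, ENNReal.ofReal (φ (t * z) / φ z) ∂μ) atTop :=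
        lintegral_liminf_le fun z =>
          ((hφ.comp (measurable_id.mul_const z)).div_const _).ennreal_ofReal

theorem lintegral_ofReal_ratio_eq {ψ ψ' : ℝ → ℝ} {z : ℝ} (hz : 0 < z)
    (hψ : ∀ t ∈ Icc (z / 2) z, HasDerivAt ψ (ψ' t) t) (hψ' : ∀ t ∈ Icc (z / 2) z, 0 ≤ ψ' t) :
    ∫⁻ t in Ioc 2⁻¹ 1, ENNReal.ofReal (ψ' (t * z) / ψ' z)
      = ENNReal.ofReal ((ψ z - ψ (z / 2)) / (z * ψ' z)) := by
  have hz2 : z / 2 ≤ z := by linarith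
  have hcont : ContinuousOn ψ (Icc (z / 2) z) :=
    fun t ht => (hψ t ht).continuousAt.continuousWithinAt
  have hint : IntervalIntegrable ψ' volume (z / 2) z :=
    (intervalIntegrable_iff_integrableOn_Ioc_of_le hz2).2 <|
      intervalIntegral.integrableOn_deriv_of_nonneg hcont
        (fun t ht => hψ t (Ioo_subset_Icc_self ht)) fun t ht => hψ' t (Ioo_subset_Icc_self ht)
  have hFTC : ∫ t in z / 2..z, ψ' t = ψ z - ψ (z / 2) :=
    intervalIntegral.integral_eq_sub_of_hasDerivAt_of_le hz2 hcont
      (fun t ht => hψ t (Ioo_subset_Icc_self ht)) hint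
  have hscale : ∫ t in (2⁻¹ : ℝ)..1, ψ' (t * z) = z⁻¹ * (ψ z - ψ (z / 2)) := by
    rw [intervalIntegral.integral_comp_mul_right _ hz.ne', inv_mul_eq_div, one_mul, ← hFTC,
      smul_eq_mul]
  have hint' : IntervalIntegrable (fun t => ψ' (t * z)) volume 2⁻¹ 1 := by
    simpa [div_div_cancel_left' hz.ne', div_self hz.ne'] using hint.comp_mul_right (c := z)
  rw [← ofReal_integral_eq_lintegral_ofReal
      ((intervalIntegrable_iff_integrableOn_Ioc_of_le (by norm_num)).1 (hint'.div_const _))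
      (ae_restrict_of_forall_mem measurableSet_Ioc fun t ht => div_nonneg
        (hψ' _ ⟨by nlinarith [ht.1], by nlinarith [ht.2]⟩) (hψ' z ⟨hz2, le_rfl⟩)),
    ← intervalIntegral.integral_of_le (by norm_num), intervalIntegral.integral_div, hscale]
  congr 1
  ring

theorem tendsto_ratio_of_tendsto_ratio_one_div {f : ℝ → ℝ} {ρ : ℝ}
    (h : ∀ t > (0 : ℝ), Tendsto (fun z => 1 / f (t * z) / (1 / f z)) atTop (𝓝 (t ^ ρ))) :
    ∀ t > (0 : ℝ), Tendsto (fun z => f (t * z) / f z) atTop (𝓝 (t ^ (-ρ))) := fun t ht => by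
  simpa [rpow_neg ht.le, div_eq_mul_inv, mul_comm] using (h t ht).inv₀ (rpow_pos_of_pos ht ρ).ne'

theorem exists_pos_eventually_mul_mul_le_of_tendsto_ratio {ψ ψ' : ℝ → ℝ} {z₀ σ : ℝ}
    (hψ : ∀ z ∈ Ici z₀, HasDerivAt ψ (ψ' z) z) (hψ' : ∀ z ∈ Ici z₀, 0 < ψ' z)
    (hψ_nonneg : ∀ᶠ z in atTop, 0 ≤ ψ z)
    (hRV : ∀ t > 0, Tendsto (fun z => ψ' (t * z) / ψ' z) atTop (𝓝 (t ^ σ))) :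
    ∃ c > 0, ∀ᶠ z in atTop, c * (z * ψ' z) ≤ ψ z := by
  -- Fatou's lemma is applied to `deriv ψ`, which is measurable and equals `ψ'` on `[z₀, ∞)`.
  have hderiv : ∀ z ∈ Ici z₀, deriv ψ z = ψ' z := fun z hz => (hψ z hz).deriv
  have hRV' : ∀ t > 0, Tendsto (fun z => deriv ψ (t * z) / deriv ψ z) atTop (𝓝 (t ^ σ)) :=
    fun t ht => (hRV t ht).congr' <| by
      filter_upwards [eventually_ge_atTop z₀,
        (tendsto_id.const_mul_atTop ht).eventually_ge_atTop z₀] with z h₁ h₂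
      rw [hderiv z h₁, hderiv (t * z) h₂]
  have hpos : 0 < ∫⁻ t in Ioc 2⁻¹ 1, ENNReal.ofReal (t ^ σ) := by
    rw [setLIntegral_pos_iff (by fun_prop : Measurable fun t : ℝ => t ^ σ).ennreal_ofReal]
    refine lt_of_lt_of_le ?_ (measure_mono fun t ht => ⟨?_, ht⟩)
    · norm_num
    · have : (0 : ℝ) < t := lt_trans (by norm_num) ht.1
      simpa using rpow_pos_of_pos this σ
  obtain ⟨b, hb₀, hb⟩ := exists_between hpos
  refine ⟨b.toReal, ENNReal.toReal_pos hb₀.ne' hb.ne_top, ?_⟩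
  filter_upwards [eventually_lt_lintegral_ofReal_ratio (measurable_deriv ψ) hRV'
      (ae_restrict_of_forall_mem measurableSet_Ioc fun t ht => lt_trans (by norm_num) ht.1) hb,
    eventually_ge_atTop (2 * max z₀ 1), (tendsto_id.atTop_div_const two_pos).eventually hψ_nonneg]
    with z hbz hz hψz
  have hz₀ : z₀ ≤ z / 2 := by linarith [le_max_left z₀ 1]
  have hz : 0 < z := by linarith [le_max_right z₀ 1]
  have hmem : ∀ t ∈ Icc (z / 2) z, t ∈ Ici z₀ := fun t ht => hz₀.trans ht.1
  rw [lintegral_ofReal_ratio_eq hz (fun t ht => (hderiv t (hmem t ht)).symm ▸ hψ t (hmem t ht))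
    (fun t ht => (hderiv t (hmem t ht)).symm ▸ (hψ' t (hmem t ht)).le),
    ENNReal.lt_ofReal_iff_toReal_lt hb.ne_top, hderiv z (hmem z ⟨by linarith, le_rfl⟩),
    lt_div_iff₀ (mul_pos hz (hψ' z (hmem z ⟨by linarith, le_rfl⟩)))] at hbz
  simp only [id] at hψz
  linarith

theorem le_six_mul_log_of_half_le {N α r p : ℝ} {d : ℕ} (hd : 1 ≤ d) (hN : 2 ≤ N)
    (hα : 0 < α) (hαr : α ≤ r) (hp : 2 * d * log r ≤ p)
    (hT : 1 / 2 ≤ N * α * r ^ (d - 1) * exp (-p) * log N) : p ≤ 6 * log N := by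
  have hr : 0 < r := hα.trans_le hαr
  have hN0 : 0 < N := by linarith
  have hexp_p : exp p ≤ 2 * (N * (α * r ^ (d - 1)) * log N) := by
    rw [exp_neg, show N * α * r ^ (d - 1) * (exp p)⁻¹ * log N
      = N * (α * r ^ (d - 1)) * log N / exp p by ring, le_div_iff₀ (exp_pos p)] at hT
    linarith
  have hpow : α * r ^ (d - 1) ≤ exp (p / 2) := by
    calc α * r ^ (d - 1) ≤ r * r ^ (d - 1) := by gcongr
      _ = exp (d * log r) := by rw [mul_pow_sub_one (by omega), ← log_pow, exp_log (by positivity)]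
      _ ≤ exp (p / 2) := exp_le_exp.2 (by linarith)
  have hhalf : exp (p / 2) ≤ N ^ 3 := by
    have hexp : exp p = exp (p / 2) * exp (p / 2) := by rw [← exp_add, add_halves]
    have : exp (p / 2) * exp (p / 2) ≤ 2 * N ^ 2 * exp (p / 2) := by
      calc exp (p / 2) * exp (p / 2) ≤ 2 * (N * exp (p / 2) * N) := by
            rw [← hexp]
            refine hexp_p.trans ?_
            gcongr
            · exact log_nonneg (by linarith)
            · exact log_le_self hN0.le
        _ = _ := by ring
    nlinarith [le_of_mul_le_mul_right this (exp_pos _)]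
  have := (le_log_iff_exp_le (by positivity)).2 hhalf
  rw [log_pow] at this
  push_cast at this
  linarith

theorem eventually_natCast_mul_pow_mul_exp_neg_le {d : ℕ} (hd : 1 ≤ d) {a ψ ψ' : ℝ → ℝ}
    {R : ℕ → ℝ} {c : ℝ} (hc : 0 < c) (hR : Tendsto R atTop atTop)
    (hRasym : Tendsto (fun n : ℕ => (n * a (R n) * R n ^ (d - 1) * exp (-ψ (R n))) * log n)
      atTop (𝓝 1))
    (ha : ∀ z, a z = 1 / ψ' z) (hψ' : ∀ᶠ z in atTop, 0 < ψ' z) (ha_le : a =o[atTop] id)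
    (hψ : ∀ᶠ z in atTop, 2 * d * log z ≤ ψ z) (hself : ∀ᶠ z in atTop, c * (z * ψ' z) ≤ ψ z) :
    ∀ᶠ n : ℕ in atTop, n * R n ^ d * exp (-ψ (R n)) ≤ 12 / c := by
  have haz : ∀ᶠ z in atTop, (0 < a z ∧ a z ≤ z) ∧ c * z ≤ a z * ψ z := by
    filter_upwards [hψ', eventually_ge_atTop 0, ha_le.bound one_pos, hself] with z h₁ h₂ h₃ h₄
    have ha₀ : 0 < a z := by rw [ha]; positivity
    refine ⟨⟨ha₀, by simpa [abs_of_pos ha₀, abs_of_nonneg h₂] using h₃⟩, ?_⟩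
    calc c * z = c * (z * ψ' z) * a z := by rw [ha]; field_simp
      _ ≤ a z * ψ z := by rw [mul_comm (a z)]; gcongr
  filter_upwards [hR.eventually (haz.and hψ), eventually_ge_atTop 2,
    hRasym (Icc_mem_nhds (by norm_num : (1 / 2 : ℝ) < 1) one_lt_two)]
    with n ⟨⟨⟨hα, hαR⟩, hselfn⟩, hψn⟩ hn hT
  have hN : (2 : ℝ) ≤ n := by exact_mod_cast hn
  have hp := le_six_mul_log_of_half_le hd hN hα hαR hψn hT.1
  have hR0 : 0 < R n := hα.trans_le hαR
  rw [le_div_iff₀' hc]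
  calc c * (n * R n ^ d * exp (-ψ (R n)))
      = n * R n ^ (d - 1) * exp (-ψ (R n)) * (c * R n) := by
        rw [← mul_pow_sub_one (by omega : d ≠ 0)]; ring
    _ ≤ n * R n ^ (d - 1) * exp (-ψ (R n)) * (a (R n) * (6 * log n)) :=
        mul_le_mul_of_nonneg_left (hselfn.trans (mul_le_mul_of_nonneg_left hp hα.le))
          (by positivity)
    _ = 6 * ((n * a (R n) * R n ^ (d - 1) * exp (-ψ (R n))) * log n) := by ring
    _ ≤ 12 := by linarith [hT.2]

theorem tendsto_zero_of_forall_eventually_le_div {ι : Type*} {l : Filter ι} {f : ι → ℝ}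
    {B d : ℝ} (h0 : ∀ i, 0 ≤ f i) (h : ∀ s > d, ∀ᶠ i in l, f i ≤ B / (s - d)) :
    Tendsto f l (𝓝 0) := by
  refine tendsto_order.2 ⟨fun ε hε => .of_forall fun i => hε.trans_le (h0 i), fun ε hε => ?_⟩
  have hB : Tendsto (fun s => B / (s - d)) atTop (𝓝 0) :=
    tendsto_const_nhds.div_atTop (tendsto_atTop_add_const_right _ _ tendsto_id)
  obtain ⟨s, hs, hsε⟩ := ((eventually_gt_atTop d).and (hB.eventually (gt_mem_nhds hε))).exists
  exact (h s hs).mono fun i hi => hi.trans_lt hsε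

theorem poisson_tail_vanishes_general
    (d : ℕ) (hd : 1 ≤ d)
    (ψ ψ' a : ℝ → ℝ) (z₀ : ℝ)
    (hC1 : ∀ z ∈ Set.Ici z₀, HasDerivAt ψ (ψ' z) z)
    (hψ'pos : ∀ z ∈ Set.Ici z₀, 0 < ψ' z)
    (hψtop : Tendsto ψ atTop atTop)
    (ha : ∀ z, a z = 1 / ψ' z)
    (haRV : ∃ ρ : ℝ, ∀ t > (0 : ℝ), Tendsto (fun z => a (t * z) / a z) atTop (𝓝 (t ^ ρ)))
    (haLittle : (fun z => a z) =o[atTop] (fun z : ℝ => z))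
    (C : ℝ) (hC : 0 < C)
    (q : EuclideanSpace ℝ (Fin d) → ℝ)
    (hq : ∀ x, q x = C * Real.exp (-ψ ‖x‖))
    (R : ℕ → ℝ) (hRtop : Tendsto R atTop atTop)
    -- the critical-radius asymptotics: `n·a(R_n)·R_n^{d-1}·e^{-ψ(R_n)} ~ (log n)⁻¹`
    (hRasym : Tendsto
      (fun n : ℕ => (n * a (R n) * R n ^ (d - 1) * Real.exp (-ψ (R n))) * Real.log n)
      atTop (𝓝 1))
    (Ω : Type*) [MeasureSpace Ω]
    -- `Cnt n A ω` is the number of points of the `n`-th Poisson process `𝒫_n` lying in `A`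
    (Cnt : ℕ → Set (EuclideanSpace ℝ (Fin d)) → Ω → ℕ)
    (hPoisson : ∀ n, ∀ A, MeasurableSet A →
      Measure.map (Cnt n A) ℙ = poissonMeasure (Real.toNNReal ((n : ℝ) * ∫ x in A, q x))) :
    Tendsto (fun n : ℕ =>
        (n : ℝ) * ∫ x in {x : EuclideanSpace ℝ (Fin d) | R n ≤ ‖x‖}, q x) atTop (𝓝 0) ∧
    Tendsto (fun n : ℕ => ℙ {ω | Cnt n {x | R n ≤ ‖x‖} ω = 0}) atTop (𝓝 1) := by
  have : Nontrivial (EuclideanSpace ℝ (Fin d)) :=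
    Module.nontrivial_of_finrank_pos (R := ℝ) (by rw [finrank_euclideanSpace_fin]; omega)
  have hψ' : ∀ᶠ z in atTop, 0 < ψ' z := (eventually_ge_atTop z₀).mono hψ'pos
  have hzψ' : Tendsto (fun z => z * ψ' z) atTop atTop := by
    simpa [ha, div_eq_mul_inv] using tendsto_div_atTop_of_isLittleO haLittle
      (hψ'.mono fun z hz => by rw [ha]; positivity)
  obtain ⟨ρ, hρ⟩ := haRV
  simp only [ha] at hρ
  obtain ⟨c, hc, hself⟩ := exists_pos_eventually_mul_mul_le_of_tendsto_ratio hC1 hψ'pos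
    (hψtop.eventually_ge_atTop 0) (tendsto_ratio_of_tendsto_ratio_one_div hρ)
  have hbound := eventually_natCast_mul_pow_mul_exp_neg_le hd hc hRtop hRasym ha hψ' haLittle
    ((tendsto_sub_mul_log_atTop hC1 hzψ' (2 * d)).eventually_ge_atTop 0 |>.mono
      fun z hz => by linarith) hself
  have hlim : Tendsto (fun n : ℕ => (n : ℝ) * ∫ x in {x : EuclideanSpace ℝ (Fin d) | R n ≤ ‖x‖},
      q x) atTop (𝓝 0) := by
    simp_rw [hq]
    refine tendsto_zero_of_forall_eventually_le_div (d := d)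
      (B := C * (d * volume.real (ball (0 : EuclideanSpace ℝ (Fin d)) 1)) * (12 / c))
      (fun n => mul_nonneg n.cast_nonneg (setIntegral_nonneg (measurableSet_setOf_le_norm _)
        fun x _ => by positivity)) fun s hs => ?_
    exact eventually_natCast_mul_integral_le volume finrank_euclideanSpace_fin hC.le hs hRtop
      (exists_monotoneOn_sub_mul_log hC1 hzψ' s) hbound
  exact ⟨hlim, tendsto_measure_setOf_eq_zero_of_poisson
    (fun n => hPoisson n _ (measurableSet_setOf_le_norm _)) hlim⟩

/-- If `q(x) = C·exp(-ψ(|x|))` with `ψ` of von Mises type and `a = 1/ψ'` regularly varying,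
and `R_n` is chosen so that `n·a(R_n)·R_n^{d-1}·exp(-ψ(R_n)) ~ (log n)⁻¹`, then the expected
number of Poisson points outside `B(0,R_n)` tends to `0`, hence the probability that the
process has no points outside `B(0,R_n)` tends to `1`. -/
theorem poisson_tail_vanishes
    (d : ℕ) (hd : 1 ≤ d)
    (ψ ψ' a : ℝ → ℝ) (z₀ : ℝ)
    (hC1 : ∀ z ∈ Set.Ici z₀, HasDerivAt ψ (ψ' z) z)
    (hψ'pos : ∀ z ∈ Set.Ici z₀, 0 < ψ' z)
    (hψtop : Tendsto ψ atTop atTop)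
    (ha : ∀ z, a z = 1 / ψ' z)
    (ha' : Tendsto (deriv a) atTop (𝓝 0))
    (haRV : ∃ ρ : ℝ, ∀ t > (0 : ℝ), Tendsto (fun z => a (t * z) / a z) atTop (𝓝 (t ^ ρ)))
    (haLittle : (fun z => a z) =o[atTop] (fun z : ℝ => z))
    (C : ℝ) (hC : 0 < C)
    (q : EuclideanSpace ℝ (Fin d) → ℝ)
    (hq : ∀ x, q x = C * Real.exp (-ψ ‖x‖))
    (n₀ : ℕ) (R : ℕ → ℝ) (hRtop : Tendsto R atTop atTop)
    -- the critical-radius asymptotics: `n·a(R_n)·R_n^{d-1}·e^{-ψ(R_n)} ~ (log n)⁻¹`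
    (hRasym : Tendsto
      (fun n : ℕ => (n * a (R n) * R n ^ (d - 1) * Real.exp (-ψ (R n))) * Real.log n)
      atTop (𝓝 1))
    (Ω : Type*) [MeasureSpace Ω] [IsProbabilityMeasure (ℙ : Measure Ω)]
    -- `Cnt n A ω` is the number of points of the `n`-th Poisson process `𝒫_n` lying in `A`
    (Cnt : ℕ → Set (EuclideanSpace ℝ (Fin d)) → Ω → ℕ)
    (hPoisson : ∀ n, ∀ A, MeasurableSet A →
      Measure.map (Cnt n A) ℙ = poissonMeasure (Real.toNNReal ((n : ℝ) * ∫ x in A, q x))) :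
    Tendsto (fun n : ℕ =>
        (n : ℝ) * ∫ x in {x : EuclideanSpace ℝ (Fin d) | R n ≤ ‖x‖}, q x) atTop (𝓝 0) ∧
    Tendsto (fun n : ℕ => ℙ {ω | Cnt n {x | R n ≤ ‖x‖} ω = 0}) atTop (𝓝 1) :=
  poisson_tail_vanishes_general d hd ψ ψ' a z₀ hC1 hψ'pos hψtop ha haRV haLittle C hC q hq R hRtop
    hRasym Ω Cnt hPoisson
end

section
/- Under the von Mises conditions (ψ' > 0, a = 1/ψ' with a' → 0, a regularly varying, a(R) = o(R)), for each fixed z ≥ 0, ψ(R + a(R)z) − ψ(R) → C'·z as R → ∞ for some constant C' > 0, and consequently ∫_0^∞ (1 + a(R)z/R)^{d−1}·exp(−(ψ(R+a(R)z)−ψ(R))) dz converges to ∫_0^∞ e^{−C'z} dz < ∞ as R → ∞. -/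
/-!
Write `a = 1 / ψ'`. Since `a' → 0`, for large `R` the function `a` stays within `ε (t - R)` of
`a R` on `[R, R + a R z]`. Comparing `ψ' = 1 / a` there with `1 / (a R + ε (t - R))` and with
`1 / (a R (1 - ε z))` gives `ε⁻¹ log (1 + ε z) ≤ ψ (R + a R z) - ψ R ≤ z / (1 - ε z)`, so the
increment tends to `z`, i.e. `C' = 1`. For `ε = 1 / (n + 2)` with `n = d - 1`, the lower bound
gives `exp (-(ψ (R + a R z) - ψ R)) ≤ (n + 2) ^ (n + 2) (1 + z) ^ (-(n + 2))`; since `a R ≤ R`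
eventually, the integrand is dominated by a multiple of `(1 + z²)⁻¹`, and dominated convergence
concludes.
-/

open Filter Topology MeasureTheory Set

theorem sub_le_sub_of_hasDerivAt_le {f g f' g' : ℝ → ℝ} {x y : ℝ} (hxy : x ≤ y)
    (hf : ∀ t ∈ Icc x y, HasDerivAt f (f' t) t) (hg : ∀ t ∈ Icc x y, HasDerivAt g (g' t) t)
    (hle : ∀ t ∈ Icc x y, f' t ≤ g' t) : f y - f x ≤ g y - g x := by
  have hgf : ∀ t ∈ Icc x y, HasDerivAt (g - f) (g' t - f' t) t := fun t ht =>
    (hg t ht).sub (hf t ht)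
  have hmono : MonotoneOn (g - f) (Icc x y) :=
    monotoneOn_of_hasDerivWithinAt_nonneg (convex_Icc x y)
      (fun t ht => (hgf t ht).continuousAt.continuousWithinAt)
      (fun t ht => (hgf t (interior_subset ht)).hasDerivWithinAt)
      (fun t ht => sub_nonneg.2 (hle t (interior_subset ht)))
  have := hmono (left_mem_Icc.2 hxy) (right_mem_Icc.2 hxy) hxy
  simp only [Pi.sub_apply] at this
  linarith

theorem inv_mul_log_le_sub_of_inv_le_deriv {ψ ψ' : ℝ → ℝ} {R α ε z : ℝ} (hα : 0 < α)
    (hε : 0 < ε) (hz : 0 ≤ z) (hψ : ∀ t ∈ Icc R (R + α * z), HasDerivAt ψ (ψ' t) t)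
    (hle : ∀ t ∈ Icc R (R + α * z), (α + ε * (t - R))⁻¹ ≤ ψ' t) :
    ε⁻¹ * Real.log (1 + ε * z) ≤ ψ (R + α * z) - ψ R := by
  have hlog : ∀ t ∈ Icc R (R + α * z), HasDerivAt (fun s => ε⁻¹ * Real.log (α + ε * (s - R)))
      (α + ε * (t - R))⁻¹ t := by
    intro t ht
    have hpos : 0 < α + ε * (t - R) := by nlinarith [ht.1]
    refine ((((((hasDerivAt_id' t).sub_const R).const_mul ε).const_add α).log
      hpos.ne').const_mul ε⁻¹).congr_deriv ?_
    field_simp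
  have key := sub_le_sub_of_hasDerivAt_le (by nlinarith) hlog hψ hle
  have hend : α + ε * (R + α * z - R) = α * (1 + ε * z) := by ring
  rwa [hend, sub_self, mul_zero, add_zero, Real.log_mul hα.ne' (by positivity), ← mul_sub,
    add_sub_cancel_left] at key

theorem tendsto_of_forall_eventually_mem_Icc {ι α β : Type*} [TopologicalSpace β] [LinearOrder β]
    [OrderTopology β] {l : Filter α} {l' : Filter ι} [l'.NeBot] {f : α → β} {lo hi : ι → β}
    {L : β} (hlo : Tendsto lo l' (𝓝 L)) (hhi : Tendsto hi l' (𝓝 L))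
    (h : ∀ᶠ i in l', ∀ᶠ x in l, f x ∈ Icc (lo i) (hi i)) : Tendsto f l (𝓝 L) := by
  refine tendsto_order.2 ⟨fun b hb => ?_, fun b hb => ?_⟩
  · obtain ⟨i, hi, hbi⟩ := (h.and ((tendsto_order.1 hlo).1 b hb)).exists
    exact hi.mono fun x hx => hbi.trans_le hx.1
  · obtain ⟨i, hi, hbi⟩ := (h.and ((tendsto_order.1 hhi).2 b hb)).exists
    exact hi.mono fun x hx => hx.2.trans_lt hbi

theorem tendsto_of_forall_inv_mul_log_le_le_div {α : Type*} {l : Filter α} {D : α → ℝ} {z : ℝ}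
    (h : ∀ ε > 0, ∀ᶠ x in l, ε⁻¹ * Real.log (1 + ε * z) ≤ D x ∧
      (ε * z < 1 → D x ≤ z / (1 - ε * z))) :
    Tendsto D l (𝓝 z) := by
  have hlog : HasDerivAt (fun ε => Real.log (1 + ε * z)) z 0 := by
    simpa using (((hasDerivAt_id' (0 : ℝ)).mul_const z).const_add 1).log (by simp)
  have hlo : Tendsto (fun ε => ε⁻¹ * Real.log (1 + ε * z)) (𝓝[>] 0) (𝓝 z) := by
    simpa using hlog.tendsto_slope_zero_right
  have hhi : Tendsto (fun ε => z / (1 - ε * z)) (𝓝[>] 0) (𝓝 z) := by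
    have hcont : ContinuousAt (fun ε : ℝ => z / (1 - ε * z)) 0 :=
      continuousAt_const.div (by fun_prop) (by simp)
    simpa using hcont.tendsto.mono_left nhdsWithin_le_nhds
  refine tendsto_of_forall_eventually_mem_Icc hlo hhi ?_
  have hsmall : ∀ᶠ ε in 𝓝[>] (0 : ℝ), ε * z < 1 := by
    have : Tendsto (fun ε : ℝ => ε * z) (𝓝[>] 0) (𝓝 0) := by
      simpa using ((tendsto_id (x := 𝓝 (0 : ℝ))).mul_const z).mono_left nhdsWithin_le_nhds
    exact this.eventually (gt_mem_nhds one_pos)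
  filter_upwards [self_mem_nhdsWithin, hsmall] with ε hε hεz
  exact (h ε hε).mono fun x hx => ⟨hx.1, hx.2 hεz⟩

theorem one_add_mul_pow_mul_exp_neg_le {n : ℕ} {q z D : ℝ} (hq0 : 0 ≤ q) (hq1 : q ≤ 1)
    (hz : 0 ≤ z) (hD : ((n : ℝ) + 2) * Real.log (1 + z / (n + 2)) ≤ D) :
    (1 + q * z) ^ n * Real.exp (-D) ≤ ((n : ℝ) + 2) ^ (n + 2) * (1 + z ^ 2)⁻¹ := by
  set m : ℝ := n + 2
  have hm : 2 ≤ m := by simp [m]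
  have hbase : (1 + q * z) ^ n ≤ (1 + z) ^ n := pow_le_pow_left₀ (by positivity) (by nlinarith) n
  have hexp : Real.exp (-D) ≤ ((1 + z / m) ^ (n + 2))⁻¹ := by
    calc Real.exp (-D) ≤ Real.exp (-(m * Real.log (1 + z / m))) := Real.exp_le_exp.2 (by linarith)
      _ = ((1 + z / m) ^ (n + 2))⁻¹ := by
        rw [Real.exp_neg, ← Real.exp_log (by positivity : 0 < (1 + z / m) ^ (n + 2)),
          Real.log_pow]
        push_cast
        rfl
  have hshift : ((1 + z / m) ^ (n + 2))⁻¹ ≤ m ^ (n + 2) * ((1 + z) ^ (n + 2))⁻¹ := by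
    rw [← div_eq_mul_inv, ← div_pow, inv_le_comm₀ (by positivity) (by positivity), ← inv_pow,
      inv_div]
    refine pow_le_pow_left₀ (by positivity) ?_ _
    rw [div_le_iff₀ (by positivity)]
    field_simp
    linarith
  calc (1 + q * z) ^ n * Real.exp (-D) ≤ (1 + z) ^ n * (m ^ (n + 2) * ((1 + z) ^ (n + 2))⁻¹) :=
        mul_le_mul hbase (hexp.trans hshift) (Real.exp_pos _).le (by positivity)
    _ = m ^ (n + 2) * ((1 + z) ^ 2)⁻¹ := by rw [pow_add]; field_simp; ring
    _ ≤ m ^ (n + 2) * (1 + z ^ 2)⁻¹ := by gcongr; nlinarith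

theorem differentiableAt_of_contDiffOn_two {ψ ψ' : ℝ → ℝ} {z₀ t : ℝ}
    (hC2 : ContDiffOn ℝ 2 ψ (Ici z₀)) (hderiv : ∀ z ∈ Ici z₀, HasDerivAt ψ (ψ' z) z)
    (ht : z₀ < t) : DifferentiableAt ℝ ψ' t := by
  have heq : deriv ψ =ᶠ[𝓝 t] ψ' := by
    filter_upwards [Ioi_mem_nhds ht] with s hs
    exact (hderiv s (mem_Ici.2 hs.le)).deriv
  have hC1 : ContDiffOn ℝ 1 (deriv ψ) (Ioi z₀) :=
    (hC2.mono Ioi_subset_Ici_self).deriv_of_isOpen isOpen_Ioi (by norm_num)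
  exact ((hC1.differentiableOn one_ne_zero t ht).differentiableAt
    (Ioi_mem_nhds ht)).congr_of_eventuallyEq heq.symm

section

variable {ψ a : ℝ → ℝ}

theorem increment_bounds_of_abs_deriv_le {R ε z : ℝ} (hε : 0 < ε) (hz : 0 ≤ z)
    (hψ : ∀ t ≥ R, HasDerivAt ψ (a t)⁻¹ t) (hpos : ∀ t ≥ R, 0 < a t)
    (hdiff : ∀ t ≥ R, DifferentiableAt ℝ a t) (hderiv : ∀ t ≥ R, |deriv a t| ≤ ε) :
    ε⁻¹ * Real.log (1 + ε * z) ≤ ψ (R + a R * z) - ψ R ∧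
      (ε * z < 1 → ψ (R + a R * z) - ψ R ≤ z / (1 - ε * z)) := by
  have haR := hpos R le_rfl
  have hlip : ∀ t ≥ R, |a t - a R| ≤ ε * (t - R) := fun t ht => by
    simpa [Real.norm_eq_abs, abs_of_nonneg (sub_nonneg.2 ht)] using
      (convex_Ici R).norm_image_sub_le_of_norm_deriv_le hdiff
        (fun s hs => by simpa using hderiv s hs) self_mem_Ici ht
  refine ⟨inv_mul_log_le_sub_of_inv_le_deriv haR hε hz (fun t ht => hψ t ht.1) fun t ht => ?_,
    fun hεz => ?_⟩
  · exact inv_anti₀ (hpos t ht.1) (by linarith [(abs_le.1 (hlip t ht.1)).2])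
  · have hlow : 0 < a R * (1 - ε * z) := mul_pos haR (by linarith)
    have hle : ∀ t ∈ Icc R (R + a R * z), (a t)⁻¹ ≤ 1 / (a R * (1 - ε * z)) := fun t ht =>
      one_div (a R * (1 - ε * z)) ▸ inv_anti₀ hlow (by nlinarith [(abs_le.1 (hlip t ht.1)).1, ht.2])
    have key := sub_le_sub_of_hasDerivAt_le (by nlinarith : R ≤ R + a R * z) (fun t ht => hψ t ht.1)
      (fun t _ => (hasDerivAt_id' t).div_const (a R * (1 - ε * z))) hle
    calc ψ (R + a R * z) - ψ R ≤ (R + a R * z) / (a R * (1 - ε * z)) - R / (a R * (1 - ε * z)) :=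
          by simpa using key
      _ = z / (1 - ε * z) := by field_simp; ring

theorem eventually_increment_bounds {z₀ : ℝ} (hψ : ∀ t ≥ z₀, HasDerivAt ψ (a t)⁻¹ t)
    (hpos : ∀ t ≥ z₀, 0 < a t) (hdiff : ∀ t > z₀, DifferentiableAt ℝ a t)
    (ha' : Tendsto (deriv a) atTop (𝓝 0)) {ε : ℝ} (hε : 0 < ε) :
    ∀ᶠ R in atTop, ∀ z, 0 ≤ z → ε⁻¹ * Real.log (1 + ε * z) ≤ ψ (R + a R * z) - ψ R ∧
      (ε * z < 1 → ψ (R + a R * z) - ψ R ≤ z / (1 - ε * z)) := by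
  have hsmall : ∀ᶠ R in atTop, ∀ t ≥ R, |deriv a t| ≤ ε := by
    refine eventually_forall_ge_atTop.2 ?_
    simpa using ((tendsto_order.1 ha'.abs).2 ε (by simpa using hε)).mono fun t ht => ht.le
  filter_upwards [hsmall, eventually_gt_atTop z₀] with R hR hRz₀ z hz
  exact increment_bounds_of_abs_deriv_le hε hz (fun t ht => hψ t (hRz₀.le.trans ht))
    (fun t ht => hpos t (hRz₀.le.trans ht)) (fun t ht => hdiff t (hRz₀.trans_le ht)) hR

theorem tendsto_increment {z₀ : ℝ} (hψ : ∀ t ≥ z₀, HasDerivAt ψ (a t)⁻¹ t)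
    (hpos : ∀ t ≥ z₀, 0 < a t) (hdiff : ∀ t > z₀, DifferentiableAt ℝ a t)
    (ha' : Tendsto (deriv a) atTop (𝓝 0)) {z : ℝ} (hz : 0 ≤ z) :
    Tendsto (fun R => ψ (R + a R * z) - ψ R) atTop (𝓝 z) :=
  tendsto_of_forall_inv_mul_log_le_le_div fun _ hε =>
    (eventually_increment_bounds hψ hpos hdiff ha' hε).mono fun _ hR => hR z hz

theorem eventually_norm_integrand_le {z₀ : ℝ} (hψ : ∀ t ≥ z₀, HasDerivAt ψ (a t)⁻¹ t)
    (hpos : ∀ t ≥ z₀, 0 < a t) (hdiff : ∀ t > z₀, DifferentiableAt ℝ a t)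
    (ha' : Tendsto (deriv a) atTop (𝓝 0)) (haR : ∀ᶠ R in atTop, a R / R ≤ 1) (n : ℕ) :
    ∀ᶠ R in atTop, ∀ z ∈ Ioi (0 : ℝ),
      ‖(1 + a R * z / R) ^ n * Real.exp (-(ψ (R + a R * z) - ψ R))‖ ≤
        ((n : ℝ) + 2) ^ (n + 2) * (1 + z ^ 2)⁻¹ := by
  filter_upwards [eventually_increment_bounds hψ hpos hdiff ha' (ε := ((n : ℝ) + 2)⁻¹)
    (by positivity), haR, eventually_gt_atTop (max z₀ 0)] with R hbounds haR hR z hz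
  have hRpos : 0 < R := (le_max_right _ _).trans_lt hR
  have hq : 0 ≤ a R / R := div_nonneg (hpos R ((le_max_left _ _).trans hR.le)).le hRpos.le
  have hD := (hbounds z (hz.le)).1
  rw [inv_inv, inv_mul_eq_div] at hD
  rw [mul_div_right_comm, Real.norm_of_nonneg (mul_nonneg (pow_nonneg (by
    nlinarith [mul_nonneg hq (hz.le)]) n) (Real.exp_pos _).le)]
  exact one_add_mul_pow_mul_exp_neg_le hq haR hz.le hD

theorem aestronglyMeasurable_integrand {z₀ : ℝ} (hψ : ∀ t ≥ z₀, HasDerivAt ψ (a t)⁻¹ t)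
    (hpos : ∀ t ≥ z₀, 0 < a t) (n : ℕ) :
    ∀ᶠ R in atTop, AEStronglyMeasurable
      (fun z => (1 + a R * z / R) ^ n * Real.exp (-(ψ (R + a R * z) - ψ R)))
      (volume.restrict (Ioi 0)) := by
  filter_upwards [eventually_ge_atTop z₀] with R hR
  have hψcont : ContinuousOn (fun z => ψ (R + a R * z)) (Ioi 0) := fun z hz =>
    ((hψ _ (by nlinarith [hpos R hR, mem_Ioi.1 hz])).continuousAt.comp
      (by fun_prop)).continuousWithinAt
  have hpow : Continuous fun z => (1 + a R * z / R) ^ n := by fun_prop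
  exact (hpow.continuousOn.mul (hψcont.sub continuousOn_const).neg.rexp).aestronglyMeasurable
    measurableSet_Ioi

end

theorem von_mises_tail_integral_convergence_general
    (d : ℕ)
    (ψ ψ' a : ℝ → ℝ) (z₀ : ℝ)
    (hC2 : ContDiffOn ℝ 2 ψ (Set.Ici z₀))
    (hderiv : ∀ z ∈ Set.Ici z₀, HasDerivAt ψ (ψ' z) z)
    (hψ'pos : ∀ z ∈ Set.Ici z₀, 0 < ψ' z)
    (ha : ∀ z, a z = 1 / ψ' z)
    (ha' : Tendsto (deriv a) atTop (𝓝 0))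
    (haLittle : (fun z => a z) =o[atTop] (fun z : ℝ => z)) :
    ∃ C' : ℝ, 0 < C' ∧
      (∀ z : ℝ, 0 ≤ z →
        Tendsto (fun R => ψ (R + a R * z) - ψ R) atTop (𝓝 (C' * z))) ∧
      Integrable (fun z => Real.exp (-C' * z)) (Measure.restrict volume (Set.Ioi 0)) ∧
      Tendsto (fun R => ∫ z in Set.Ioi (0 : ℝ),
          (1 + a R * z / R) ^ (d - 1) * Real.exp (-(ψ (R + a R * z) - ψ R)))
        atTop (𝓝 (∫ z in Set.Ioi (0 : ℝ), Real.exp (-C' * z))) := by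
  have hψ : ∀ t ≥ z₀, HasDerivAt ψ (a t)⁻¹ t := fun t ht => by simpa [ha] using hderiv t ht
  have hpos : ∀ t ≥ z₀, 0 < a t := fun t ht => by simpa [ha] using hψ'pos t ht
  have hdiff : ∀ t > z₀, DifferentiableAt ℝ a t := fun t ht => by
    rw [show a = fun z => (ψ' z)⁻¹ from funext fun z => (ha z).trans (one_div _)]
    exact (differentiableAt_of_contDiffOn_two hC2 hderiv ht).inv (hψ'pos t ht.le).ne'
  have hlim := fun z (hz : 0 ≤ z) => tendsto_increment hψ hpos hdiff ha' hz
  have haR : Tendsto (fun R => a R / R) atTop (𝓝 0) := haLittle.tendsto_div_nhds_zero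
  refine ⟨1, one_pos, fun z hz => by simpa using hlim z hz,
    by simpa [IntegrableOn] using exp_neg_integrableOn_Ioi 0 one_pos, ?_⟩
  refine tendsto_integral_filter_of_dominated_convergence _
    (aestronglyMeasurable_integrand hψ hpos _)
    ((eventually_norm_integrand_le hψ hpos hdiff ha' (haR.eventually (ge_mem_nhds one_pos))
      (d - 1)).mono fun R hR => (ae_restrict_iff' measurableSet_Ioi).2 (ae_of_all _ hR))
    (integrable_inv_one_add_sq.const_mul _).integrableOn
    ((ae_restrict_iff' measurableSet_Ioi).2 (ae_of_all _ fun z hz => ?_))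
  have hbase : Tendsto (fun R => 1 + a R * z / R) atTop (𝓝 1) := by
    simpa [mul_div_right_comm] using (haR.mul_const z).const_add 1
  simpa using (hbase.pow (d - 1)).mul (hlim z (hz.le)).neg.rexp

/-- Under the von Mises conditions, `ψ(R + a(R)z) - ψ(R) → C'·z` for each fixed `z ≥ 0`,
and the tail integral converges to `∫_0^∞ e^{-C'z} dz < ∞`. -/
theorem von_mises_tail_integral_convergence
    (d : ℕ) (hd : 1 ≤ d)
    (ψ ψ' a : ℝ → ℝ) (z₀ : ℝ)
    (hC2 : ContDiffOn ℝ 2 ψ (Set.Ici z₀))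
    (hderiv : ∀ z ∈ Set.Ici z₀, HasDerivAt ψ (ψ' z) z)
    (hψ'pos : ∀ z ∈ Set.Ici z₀, 0 < ψ' z)
    (hψtop : Tendsto ψ atTop atTop)
    (ha : ∀ z, a z = 1 / ψ' z)
    (ha' : Tendsto (deriv a) atTop (𝓝 0))
    (haRV : ∃ ρ : ℝ, ∀ t > (0 : ℝ), Tendsto (fun z => a (t * z) / a z) atTop (𝓝 (t ^ ρ)))
    (haLittle : (fun z => a z) =o[atTop] (fun z : ℝ => z)) :
    ∃ C' : ℝ, 0 < C' ∧
      (∀ z : ℝ, 0 ≤ z →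
        Tendsto (fun R => ψ (R + a R * z) - ψ R) atTop (𝓝 (C' * z))) ∧
      Integrable (fun z => Real.exp (-C' * z)) (Measure.restrict volume (Set.Ioi 0)) ∧
      Tendsto (fun R => ∫ z in Set.Ioi (0 : ℝ),
          (1 + a R * z / R) ^ (d - 1) * Real.exp (-(ψ (R + a R * z) - ψ R)))
        atTop (𝓝 (∫ z in Set.Ioi (0 : ℝ), Real.exp (-C' * z))) :=
  von_mises_tail_integral_convergence_general d ψ ψ' a z₀ hC2 hderiv hψ'pos ha ha' haLittle
end
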